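/- arXiv:1907.10350 — 5 statements merged into one kernel-verified Lean document; each statement's English description precedes it below -/
import Mathlib

section
/- Let R be a finite ring, let r ∈ R with r ≠ 0, and let x ∈ R. In the r-noncommuting graph Γ_R^r: if 2r = 0, then the degree of x equals |R| - 1 when T_{x,r} = ∅ and equals |R| - |C_R(x)| - 1 otherwise; if 2r ≠ 0, then the degree of x equals |R| - 1 when T_{x,r} = ∅ and equals |R| - 2|C_R(x)| - 1 otherwise. -/
/-!
The map `ad x : y ↦ x * y - y * x` is additive with kernel the centralizer `C_R(x)`, so each of
its nonempty fibers, in particular `T_{x,r}`, is a coset of `C_R(x)`. The non-neighbours of `x`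
are `x` itself and the fibers over `r` and `-r`; these are nonempty together (`y ↦ -y`) and,
when nonempty, they coincide if `2r = 0` and are disjoint otherwise.
-/

/-- The `r`-noncommuting graph of a finite ring `R`: vertices are elements of `R`,
and distinct `x`, `y` are adjacent iff `x*y - y*x ≠ r` and `x*y - y*x ≠ -r`. -/
def ncGraph {R : Type*} [NonUnitalRing R] (r : R) : SimpleGraph R where
  Adj x y := x ≠ y ∧ x * y - y * x ≠ r ∧ x * y - y * x ≠ -r
  symm := by
    constructor
    rintro x y ⟨h1, h2, h3⟩
    refine ⟨h1.symm, fun h => h3 ?_, fun h => h2 ?_⟩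
    · rw [← neg_sub (y * x) (x * y), h]
    · rw [← neg_sub (y * x) (x * y), h, neg_neg]
  loopless := ⟨fun x h => h.1 rfl⟩

section NoncommutingGraph

variable {R : Type*} [NonUnitalRing R]

def adHom (x : R) : R →+ R := AddMonoidHom.mulLeft x - AddMonoidHom.mulRight x

lemma coe_ker_adHom (x : R) : ((adHom x).ker : Set R) = {y | x * y = y * x} := by
  ext y
  simp [adHom, sub_eq_zero]

theorem ncard_commutator_fiber_eq_ncard_centralizer {x s : R}
    (hs : {y | x * y - y * x = s}.Nonempty) :
    {y | x * y - y * x = s}.ncard = {y | x * y = y * x}.ncard := by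
  obtain ⟨y₀, rfl⟩ := hs
  rw [← coe_ker_adHom, ← Nat.card_coe_set_eq, ← Nat.card_coe_set_eq]
  exact Nat.card_congr ((adHom x).fiberEquivKer y₀)

lemma commutator_neg_right (x y : R) : x * -y - -y * x = -(x * y - y * x) := by
  noncomm_ring

lemma commutator_fiber_neg_nonempty_iff {x s : R} :
    {y | x * y - y * x = -s}.Nonempty ↔ {y | x * y - y * x = s}.Nonempty := by
  constructor <;> rintro ⟨y, hy : x * y - y * x = _⟩ <;> refine ⟨-y, ?_⟩
  · rw [Set.mem_ofPred_eq, commutator_neg_right, hy, neg_neg]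
  · rw [Set.mem_ofPred_eq, commutator_neg_right, hy]

lemma ncGraph_neighborSet (r x : R) :
    (ncGraph r).neighborSet x = (insert x {y | x * y - y * x = r ∨ x * y - y * x = -r})ᶜ := by
  ext y
  simp only [SimpleGraph.mem_neighborSet, ncGraph, Set.mem_compl_iff, Set.mem_insert_iff,
    Set.mem_ofPred_eq, not_or, ne_comm (a := x)]

theorem ncard_neighborSet_ncGraph [Finite R] {r : R} (hr : r ≠ 0) (x : R) :
    ((ncGraph r).neighborSet x).ncard
      = Nat.card R - {y | x * y - y * x = r ∨ x * y - y * x = -r}.ncard - 1 := by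
  have hx : x ∉ {y | x * y - y * x = r ∨ x * y - y * x = -r} := by
    simp [sub_self, eq_comm (a := (0 : R)), hr]
  rw [ncGraph_neighborSet, Set.ncard_compl, Set.ncard_insert_of_notMem hx]
  omega

lemma setOf_commutator_eq_or_eq_neg_eq_empty {x r : R} (hT : {y | x * y - y * x = r} = ∅) :
    {y | x * y - y * x = r ∨ x * y - y * x = -r} = ∅ := by
  have hT' : {y | x * y - y * x = -r} = ∅ := by
    rw [← Set.not_nonempty_iff_eq_empty, commutator_fiber_neg_nonempty_iff,
      Set.not_nonempty_iff_eq_empty, hT]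
  rw [Set.ofPred_or, hT, hT', Set.union_empty]

theorem ncard_commutator_eq_or_eq_neg_of_add_self_eq_zero {x r : R} (h2r : r + r = 0)
    (hT : {y | x * y - y * x = r}.Nonempty) :
    {y | x * y - y * x = r ∨ x * y - y * x = -r}.ncard = {y | x * y = y * x}.ncard := by
  simp only [neg_eq_of_add_eq_zero_left h2r, or_self,
    ncard_commutator_fiber_eq_ncard_centralizer hT]

theorem ncard_commutator_eq_or_eq_neg_of_add_self_ne_zero [Finite R] {x r : R} (h2r : r + r ≠ 0)
    (hT : {y | x * y - y * x = r}.Nonempty) :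
    {y | x * y - y * x = r ∨ x * y - y * x = -r}.ncard = 2 * {y | x * y = y * x}.ncard := by
  have hdisj : Disjoint {y | x * y - y * x = r} {y | x * y - y * x = -r} :=
    Set.disjoint_left.2 fun y hr hnr => h2r (add_eq_zero_iff_eq_neg.2 (hr.symm.trans hnr))
  rw [Set.ofPred_or, Set.ncard_union_eq hdisj, ncard_commutator_fiber_eq_ncard_centralizer hT,
    ncard_commutator_fiber_eq_ncard_centralizer (commutator_fiber_neg_nonempty_iff.2 hT), two_mul]

end NoncommutingGraph

/-- degrees in Γ_R^r in terms of centralizers, for r ≠ 0. -/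
theorem stmt2 {R : Type*} [NonUnitalRing R] [Fintype R] (r : R) (hr : r ≠ 0) (x : R) :
    (r + r = 0 →
      (({y : R | x * y - y * x = r}) = ∅ →
        ((ncGraph r).neighborSet x).ncard = Nat.card R - 1) ∧
      (({y : R | x * y - y * x = r}) ≠ ∅ →
        ((ncGraph r).neighborSet x).ncard
          = Nat.card R - ({y : R | x * y = y * x}).ncard - 1)) ∧
    (r + r ≠ 0 →
      (({y : R | x * y - y * x = r}) = ∅ →
        ((ncGraph r).neighborSet x).ncard = Nat.card R - 1) ∧
      (({y : R | x * y - y * x = r}) ≠ ∅ →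
        ((ncGraph r).neighborSet x).ncard
          = Nat.card R - 2 * ({y : R | x * y = y * x}).ncard - 1)) := by
  have degree_of_empty (hT : {y : R | x * y - y * x = r} = ∅) :
      ((ncGraph r).neighborSet x).ncard = Nat.card R - 1 := by
    rw [ncard_neighborSet_ncGraph hr, setOf_commutator_eq_or_eq_neg_eq_empty hT, Set.ncard_empty,
      Nat.sub_zero]
  refine ⟨fun h2r => ⟨degree_of_empty, fun hT => ?_⟩,
    fun h2r => ⟨degree_of_empty, fun hT => ?_⟩⟩
  · rw [ncard_neighborSet_ncGraph hr, ncard_commutator_eq_or_eq_neg_of_add_self_eq_zero h2r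
      (Set.nonempty_iff_ne_empty.2 hT)]
  · rw [ncard_neighborSet_ncGraph hr, ncard_commutator_eq_or_eq_neg_of_add_self_ne_zero h2r
      (Set.nonempty_iff_ne_empty.2 hT)]
end

section
/- Let R be a finite noncommutative ring with |R| > 4 and let r ∈ R. Then no vertex of the r-noncommuting graph Γ_R^r has degree 1. -/
lemma Set.ncard_le_two_of_subset_pair {α : Type*} {s : Set α} {a b : α} (h : s ⊆ {a, b}) :
    s.ncard ≤ 2 :=
  calc s.ncard ≤ ({a, b} : Set α).ncard := Set.ncard_le_ncard h (Set.toFinite _)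
    _ ≤ ({b} : Set α).ncard + 1 := Set.ncard_insert_le a {b}
    _ = 2 := by rw [Set.ncard_singleton]

lemma AddMonoidHom.card_ker_mul_card_range {G H : Type*} [AddGroup G] [AddGroup H]
    (f : G →+ H) : Nat.card f.ker * Nat.card f.range = Nat.card G := by
  rw [← AddSubgroup.index_ker, AddSubgroup.card_mul_index]

namespace ncGraph

variable {R : Type*} [NonUnitalRing R]

def ad (x : R) : R →+ R := AddMonoidHom.mulLeft x - AddMonoidHom.mulRight x

@[simp]
lemma ad_apply (x z : R) : ad x z = x * z - z * x := rfl

lemma ad_add_self (x z : R) : ad (x + x) z = ad x z + ad x z := by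
  simp only [ad_apply]
  noncomm_ring

variable {r x y z : R}

lemma adj_iff : (ncGraph r).Adj x z ↔ x ≠ z ∧ ad x z ≠ r ∧ ad x z ≠ -r := Iff.rfl

lemma adj_zero_iff : (ncGraph r).Adj x 0 ↔ x ≠ 0 ∧ r ≠ 0 := by
  simp [adj_iff, eq_comm (a := (0 : R))]

lemma adj_of_ad_eq_zero (hr : r ≠ 0) (hxz : x ≠ z) (hz : ad x z = 0) : (ncGraph r).Adj x z :=
  adj_iff.mpr ⟨hxz, by simpa [hz, eq_comm] using hr, by simpa [hz, eq_comm] using hr⟩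

lemma adj_add_self (hz : (ncGraph r).Adj x z) (hz0 : z ≠ 0) : (ncGraph r).Adj x (z + x) := by
  obtain ⟨-, hr, hr'⟩ := adj_iff.mp hz
  have hc : ad x (z + x) = ad x z := by
    simp only [ad_apply]
    noncomm_ring
  exact adj_iff.mpr ⟨by simpa [eq_comm] using hz0, hc ▸ hr, hc ▸ hr'⟩

section UniqueNeighbor

variable (h : (ncGraph r).neighborSet x = {y})
include h

lemma eq_of_adj (hz : (ncGraph r).Adj x z) : z = y := by
  rwa [← SimpleGraph.mem_neighborSet, h] at hz

lemma adj_of_neighborSet_eq_singleton : (ncGraph r).Adj x y :=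
  (SimpleGraph.mem_neighborSet _ _ _).mp (h ▸ rfl)

lemma eq_zero_of_neighborSet_eq_singleton (hx : x ≠ 0) : y = 0 := by
  by_contra hy0
  have hyx := eq_of_adj h (adj_add_self (adj_of_neighborSet_eq_singleton h) hy0)
  exact hx (add_eq_left.mp hyx)

end UniqueNeighbor

lemma card_le_two_of_neighborSet_zero_eq_singleton
    (h : (ncGraph r).neighborSet 0 = {y}) : Nat.card R ≤ 2 := by
  have hr := (adj_zero_iff.mp (adj_of_neighborSet_eq_singleton h).symm).2
  have hR : ∀ z : R, z = 0 ∨ z = y := fun z =>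
    or_iff_not_imp_left.mpr fun hz => eq_of_adj h (adj_of_ad_eq_zero hr (Ne.symm hz) (by simp))
  rw [← Set.ncard_univ]
  exact Set.ncard_le_two_of_subset_pair fun z _ => hR z

section UniqueNeighborZero

variable (h : (ncGraph r).neighborSet x = {0})
include h

lemma ker_ad_subset : ((ad x).ker : Set R) ⊆ {0, x} := by
  intro w (hw : ad x w = 0)
  have hr := (adj_zero_iff.mp (adj_of_neighborSet_eq_singleton h)).2
  by_cases hwx : w = x
  · exact Or.inr hwx
  · exact Or.inl (eq_of_adj h (adj_of_ad_eq_zero hr (Ne.symm hwx) hw))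

lemma add_self_eq_zero_of_neighborSet : x + x = 0 := by
  have hker : ad x (x + x) = 0 := by
    simp only [ad_apply]
    noncomm_ring
  rcases ker_ad_subset h hker with h0 | hx
  · exact h0
  · exact absurd (add_eq_right.mp hx) (adj_zero_iff.mp (adj_of_neighborSet_eq_singleton h)).1

lemma range_ad_subset : ((ad x).range : Set R) ⊆ {0, r} := by
  rintro _ ⟨w, rfl⟩
  have hneg : ad x w = -ad x w := by
    refine eq_neg_of_add_eq_zero_left ?_
    rw [← ad_add_self, add_self_eq_zero_of_neighborSet h]
    simp
  by_cases hr : ad x w = r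
  · exact Or.inr hr
  by_cases hr' : ad x w = -r
  · exact Or.inr (show ad x w = r by rw [hneg, hr', neg_neg])
  by_cases hwx : x = w
  · simp [hwx]
  · simp [eq_of_adj h (adj_iff.mpr ⟨hwx, hr, hr'⟩)]

lemma card_le_four_of_neighborSet_eq_singleton_zero : Nat.card R ≤ 4 := by
  rw [← (ad x).card_ker_mul_card_range, ← SetLike.coe_sort_coe,
    ← SetLike.coe_sort_coe (ad x).range, Nat.card_coe_set_eq, Nat.card_coe_set_eq]
  exact Nat.mul_le_mul (Set.ncard_le_two_of_subset_pair (ker_ad_subset h))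
    (Set.ncard_le_two_of_subset_pair (range_ad_subset h))

end UniqueNeighborZero

end ncGraph

theorem stmt5_general {R : Type*} [NonUnitalRing R]
    (hcard : 4 < Nat.card R) (r : R) (x : R) :
    ((ncGraph r).neighborSet x).ncard ≠ 1 := by
  intro hdeg
  obtain ⟨y, hy⟩ := Set.ncard_eq_one.mp hdeg
  have hsmall : Nat.card R ≤ 4 := by
    rcases eq_or_ne x 0 with rfl | hx
    · exact (ncGraph.card_le_two_of_neighborSet_zero_eq_singleton hy).trans (by norm_num)
    · rw [ncGraph.eq_zero_of_neighborSet_eq_singleton hy hx] at hy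
      exact ncGraph.card_le_four_of_neighborSet_eq_singleton_zero hy
  omega

/-- if R is noncommutative with more than 4 elements, no vertex of Γ_R^r
has degree 1. -/
theorem stmt5 {R : Type*} [NonUnitalRing R] [Fintype R]
    (hnc : ∃ a b : R, a * b ≠ b * a) (hcard : 4 < Nat.card R) (r : R) (x : R) :
    ((ncGraph r).neighborSet x).ncard ≠ 1 :=
  stmt5_general hcard r x
end

section
/- Let R be a finite noncommutative ring and let r ∈ K(R). Then the r-noncommuting graph Γ_R^r is not regular; that is, there is no natural number d such that every vertex of Γ_R^r has degree d. -/
theorem SimpleGraph.IsUniversal.ncard_neighborSet_lt {V : Type*} [Finite V] {G : SimpleGraph V}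
    {u v w : V} (hu : G.IsUniversal u) (hvw : v ≠ w) (hnadj : ¬G.Adj v w) :
    (G.neighborSet v).ncard < (G.neighborSet u).ncard := by
  have hssubset : G.neighborSet v ⊂ {v}ᶜ :=
    (G.neighborSet_subset_compl v).ssubset_of_mem_notMem (Set.mem_compl_singleton_iff.2 hvw.symm)
      hnadj
  calc (G.neighborSet v).ncard < ({v}ᶜ : Set V).ncard := Set.ncard_lt_ncard hssubset
    _ = ({u}ᶜ : Set V).ncard := by rw [Set.ncard_compl, Set.ncard_compl, Set.ncard_singleton,
        Set.ncard_singleton]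
    _ = (G.neighborSet u).ncard := by rw [hu.neighborSet_eq]

section ncGraph

variable {R : Type*} [NonUnitalRing R]

theorem ncGraph_zero_adj_iff {x y : R} : (ncGraph (0 : R)).Adj x y ↔ x * y ≠ y * x := by
  simp only [ncGraph, neg_zero, sub_ne_zero, and_self, and_iff_right_iff_imp]
  rintro hxy rfl
  exact hxy rfl

theorem ncGraph_zero_neighborSet_eq_empty_of_commute {z : R} (hz : ∀ y, z * y = y * z) :
    (ncGraph (0 : R)).neighborSet z = ∅ :=
  Set.eq_empty_of_forall_notMem fun y hy => ncGraph_zero_adj_iff.1 hy (hz y)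

theorem ncGraph_isUniversal_of_commute {r z : R} (hr : r ≠ 0) (hz : ∀ y, z * y = y * z) :
    (ncGraph r).IsUniversal z := by
  intro y hzy
  show z ≠ y ∧ z * y - y * z ≠ r ∧ z * y - y * z ≠ -r
  rw [hz y, sub_self]
  exact ⟨hzy, hr.symm, fun h => hr (neg_eq_zero.1 h.symm)⟩

end ncGraph

/-- for a noncommutative ring R and r ∈ K(R), Γ_R^r is not regular. -/
theorem stmt7 {R : Type*} [NonUnitalRing R] [Fintype R]
    (hnc : ∃ a b : R, a * b ≠ b * a) (r : R) (hr : ∃ a b : R, a * b - b * a = r) :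
    ¬ ∃ d : ℕ, ∀ x : R, ((ncGraph r).neighborSet x).ncard = d := by
  rintro ⟨d, hd⟩
  obtain ⟨a, b, rfl⟩ := hr
  have hzero : ∀ y : R, 0 * y = y * 0 := by simp
  by_cases hr0 : a * b - b * a = 0
  · rw [hr0] at hd
    obtain ⟨x, y, hxy⟩ := hnc
    have hpos : 0 < ((ncGraph (0 : R)).neighborSet x).ncard :=
      (Set.ncard_pos (Set.toFinite _)).2 ⟨y, ncGraph_zero_adj_iff.2 hxy⟩
    rw [hd x, ← hd 0, ncGraph_zero_neighborSet_eq_empty_of_commute hzero, Set.ncard_empty] at hpos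
    exact hpos.false
  · have hab : a ≠ b := by
      rintro rfl
      exact hr0 (sub_self _)
    have hlt := (ncGraph_isUniversal_of_commute hr0 hzero).ncard_neighborSet_lt hab
      fun hadj => hadj.2.1 rfl
    rw [hd, hd] at hlt
    exact hlt.false
end

section
/- Let R be a finite noncommutative ring and let r ∈ R ∖ Z(R) with 2r ≠ 0 and 3r ≠ 0. Then the diameter of Δ_R^r is at most 3; that is, any two distinct vertices of Δ_R^r are joined by a path of length at most 3. -/
/-- The center of R as a set. -/
def centerSet (R : Type*) [NonUnitalRing R] : Set R := {z | ∀ x, z * x = x * z}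

/-- The induced subgraph of the r-noncommuting graph on the non-central elements. -/
def deltaGraph {R : Type*} [NonUnitalRing R] (r : R) :
    SimpleGraph {x : R // x ∉ centerSet R} :=
  (ncGraph r).comap Subtype.val

/-! If `x` and `y` are not adjacent then `[x, y] = ±r`, so `[x, 2y] = ±2r`, which is neither `±r`
(as `r ≠ 0` and `3r ≠ 0`) nor `0` (as `2r ≠ 0`). Hence `2y` is non-central and `x — 2y — y` is a
path, because `[2y, y] = 0 ≠ ±r`. -/

lemma add_self_ne_and_ne_neg {G : Type*} [AddCommGroup G] {r c : G}
    (hr : r ≠ 0) (h3 : r + r + r ≠ 0) (hc : c = r ∨ c = -r) :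
    c + c ≠ r ∧ c + c ≠ -r := by
  rcases hc with rfl | rfl
  · exact ⟨fun h => hr (by simpa using h), fun h => h3 (by rw [h, neg_add_cancel])⟩
  · refine ⟨fun h => h3 ?_, fun h => hr (by simpa using h)⟩
    rw [← neg_add, neg_eq_iff_eq_neg] at h
    rw [h, neg_add_cancel]

lemma notMem_centerSet_of_mul_sub_mul_ne_zero {R : Type*} [NonUnitalRing R] {x z : R}
    (h : x * z - z * x ≠ 0) : z ∉ centerSet R :=
  fun hz => h (by rw [hz x, sub_self])

lemma ne_zero_of_notMem_centerSet {R : Type*} [NonUnitalRing R] {y : R}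
    (hy : y ∉ centerSet R) : y ≠ 0 := by
  rintro rfl
  exact hy fun x => by rw [zero_mul, mul_zero]

lemma mul_add_self_sub_add_self_mul {R : Type*} [NonUnitalRing R] (x y : R) :
    x * (y + y) - (y + y) * x = (x * y - y * x) + (x * y - y * x) := by
  noncomm_ring

lemma add_self_mul_sub_mul_add_self {R : Type*} [NonUnitalRing R] (y : R) :
    (y + y) * y - y * (y + y) = 0 := by
  noncomm_ring

namespace ncGraph

variable {R : Type*} [NonUnitalRing R] {r : R}

lemma mul_sub_mul_eq_or_eq_neg_of_not_adj {x y : R} (hxy : x ≠ y) (h : ¬ (ncGraph r).Adj x y) :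
    x * y - y * x = r ∨ x * y - y * x = -r := by
  by_contra hc
  rw [not_or] at hc
  exact h ⟨hxy, hc⟩

lemma adj_add_self_right (hr : r ≠ 0) {y : R} (hy : y ≠ 0) : (ncGraph r).Adj (y + y) y := by
  refine ⟨fun h => hy (by simpa using h), ?_, ?_⟩ <;> rw [add_self_mul_sub_mul_add_self]
  · exact hr.symm
  · exact (neg_ne_zero.mpr hr).symm

lemma adj_add_self_of_mul_sub_mul (hr : r ≠ 0) (h3 : r + r + r ≠ 0) {x y : R}
    (hc : x * y - y * x = r ∨ x * y - y * x = -r) : (ncGraph r).Adj x (y + y) := by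
  obtain ⟨hne, hne_neg⟩ := add_self_ne_and_ne_neg hr h3 hc
  refine ⟨?_, ?_, ?_⟩
  · rintro rfl
    rcases hc with hc | hc <;> rw [add_self_mul_sub_mul_add_self] at hc
    · exact hr hc.symm
    · exact hr (neg_eq_zero.mp hc.symm)
  · rwa [mul_add_self_sub_add_self_mul]
  · rwa [mul_add_self_sub_add_self_mul]

end ncGraph

theorem stmt13_general {R : Type*} [NonUnitalRing R] (r : R)
    (h2 : r + r ≠ 0) (h3 : r + r + r ≠ 0) :
    ∀ x y : {a : R // a ∉ centerSet R}, x ≠ y →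
      ∃ w : (deltaGraph r).Walk x y, w.length ≤ 3 := by
  intro x y hxy
  have hr : r ≠ 0 := by rintro rfl; simp at h2
  by_cases hadj : (deltaGraph r).Adj x y
  · exact ⟨hadj.toWalk, by simp⟩
  have hc := ncGraph.mul_sub_mul_eq_or_eq_neg_of_not_adj (Subtype.val_injective.ne hxy) hadj
  have hz : (y : R) + y ∉ centerSet R := by
    apply notMem_centerSet_of_mul_sub_mul_ne_zero (x := (x : R))
    rw [mul_add_self_sub_add_self_mul]
    rcases hc with hc | hc <;> rw [hc]
    · exact h2
    · rwa [← neg_add, neg_ne_zero]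
  let z : {a : R // a ∉ centerSet R} := ⟨y + y, hz⟩
  have hxz : (deltaGraph r).Adj x z := ncGraph.adj_add_self_of_mul_sub_mul hr h3 hc
  have hzy : (deltaGraph r).Adj z y :=
    ncGraph.adj_add_self_right hr (ne_zero_of_notMem_centerSet y.2)
  exact ⟨hxz.toWalk.concat hzy, by simp⟩

/-- if R is noncommutative, r ∉ Z(R), 2r ≠ 0 and 3r ≠ 0, then any two
distinct vertices of Δ_R^r are joined by a path of length at most 3. -/
theorem stmt13 {R : Type*} [NonUnitalRing R] [Fintype R]
    (hnc : ∃ a b : R, a * b ≠ b * a) (r : R) (hr : r ∉ centerSet R)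
    (h2 : r + r ≠ 0) (h3 : r + r + r ≠ 0) :
    ∀ x y : {a : R // a ∉ centerSet R}, x ≠ y →
      ∃ w : (deltaGraph r).Walk x y, w.length ≤ 3 :=
  stmt13_general r h2 h3
end

section
/- Let R be a finite noncommutative ring with |Z(R)| = 1 and let r ∈ R ∖ Z(R) with 2r ≠ 0, 3r = 0, and |C_R(r)| ≠ 3. Then the diameter of Δ_R^r is at most 3; that is, any two distinct vertices of Δ_R^r are joined by a path of length at most 3. -/
namespace SimpleGraph

variable {V : Type*} {G : SimpleGraph V}

lemma exists_walk_length_le_one_of_eq_or_adj {u v : V} (h : u = v ∨ G.Adj u v) :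
    ∃ w : G.Walk u v, w.length ≤ 1 := by
  rcases h with rfl | h
  · exact ⟨.nil, zero_le_one⟩
  · exact ⟨h.toWalk, le_rfl⟩

theorem exists_walk_length_le_three_of_isClique_of_dominating {K : Set V} (hK : G.IsClique K)
    (hdom : ∀ v, ∃ k ∈ K, v = k ∨ G.Adj v k) (x y : V) : ∃ w : G.Walk x y, w.length ≤ 3 := by
  obtain ⟨k, hk, hxk⟩ := hdom x
  obtain ⟨l, hl, hyl⟩ := hdom y
  obtain ⟨w₁, h₁⟩ := exists_walk_length_le_one_of_eq_or_adj hxk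
  obtain ⟨w₂, h₂⟩ := exists_walk_length_le_one_of_eq_or_adj ((eq_or_ne k l).imp id (hK hk hl))
  obtain ⟨w₃, h₃⟩ := exists_walk_length_le_one_of_eq_or_adj (hyl.imp Eq.symm Adj.symm)
  refine ⟨w₁.append (w₂.append w₃), ?_⟩
  simp only [Walk.length_append]
  omega

theorem exists_walk_length_le_three_comap_subtype_of_isClique {p : V → Prop} {K : Set V}
    (hKp : ∀ k ∈ K, p k) (hK : G.IsClique K) (hdom : ∀ v, p v → ∃ k ∈ K, v = k ∨ G.Adj v k)
    (x y : Subtype p) :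
    ∃ w : (G.comap Subtype.val).Walk x y, w.length ≤ 3 := by
  refine exists_walk_length_le_three_of_isClique_of_dominating
    (K := Subtype.val ⁻¹' K) (fun a ha b hb hab => hK ha hb (Subtype.val_injective.ne hab)) ?_ x y
  intro v
  obtain ⟨k, hk, hvk⟩ := hdom v v.2
  exact ⟨⟨k, hKp k hk⟩, hk, hvk.imp Subtype.ext id⟩

end SimpleGraph

section NonUnitalRing

variable {R : Type*} [NonUnitalRing R]

lemma centerSet_eq_singleton_zero (hZ : (centerSet R).ncard = 1) : centerSet R = {0} := by
  obtain ⟨a, ha⟩ := Set.ncard_eq_one.mp hZ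
  have h0 : (0 : R) ∈ centerSet R := fun x => by rw [zero_mul, mul_zero]
  rwa [ha, Set.mem_singleton_iff, eq_comm, ← Set.singleton_eq_singleton_iff, ← ha] at h0

lemma ncGraph_adj_of_commute {r a b : R} (hr : r ≠ 0) (hab : Commute a b) (hne : a ≠ b) :
    (ncGraph r).Adj a b := by
  have h : a * b - b * a = 0 := sub_eq_zero.mpr hab.eq
  exact ⟨hne, h ▸ hr.symm, h ▸ (neg_ne_zero.mpr hr).symm⟩

lemma isClique_ncGraph {r : R} (hr : r ≠ 0) {K : Set R} (hK : K.Pairwise Commute) :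
    (ncGraph r).IsClique K :=
  fun _ ha _ hb hne => ncGraph_adj_of_commute hr (hK ha hb hne) hne

lemma commutator_add_zsmul (x s r : R) (n : ℤ) :
    x * (s + n • r) - (s + n • r) * x = (x * s - s * x) + n • (x * r - r * x) := by
  simp only [mul_add, add_mul, mul_smul_comm, smul_mul_assoc, smul_sub]
  abel

lemma exists_commute_notMem_zmultiples {p : ℕ} [Fact p.Prime] {r : R} (hr : r ≠ 0)
    (hp : p • r = 0) (hC : {y : R | r * y = y * r}.ncard ≠ p) :
    ∃ s, Commute r s ∧ s ∉ AddSubgroup.zmultiples r := by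
  by_contra! h
  refine hC ?_
  have hCA : {y : R | r * y = y * r} = AddSubgroup.zmultiples r := by
    ext y
    refine ⟨h y, ?_⟩
    rintro ⟨n, rfl⟩
    exact ((Commute.refl r).smul_right n).eq
  rw [hCA, ← Nat.card_coe_set_eq, SetLike.coe_sort_coe, Nat.card_zmultiples,
    addOrderOf_eq_prime hp hr]

lemma exists_commutator_add_zsmul_ne {r x : R} (hr : r ≠ 0)
    (hx : x * r - r * x = r ∨ x * r - r * x = -r) (s : R) :
    ∃ n : ℤ, x * (s + n • r) - (s + n • r) * x ≠ r ∧ x * (s + n • r) - (s + n • r) * x ≠ -r := by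
  by_cases hc : x * s - s * x ∈ AddSubgroup.zmultiples (x * r - r * x)
  · obtain ⟨m, hm⟩ := hc
    refine ⟨-m, ?_⟩
    rw [commutator_add_zsmul, ← hm, neg_zsmul, add_neg_cancel]
    exact ⟨hr.symm, (neg_ne_zero.mpr hr).symm⟩
  · have hA : AddSubgroup.zmultiples (x * r - r * x) = AddSubgroup.zmultiples r := by
      rcases hx with h | h <;> rw [h]
      exact AddSubgroup.zmultiples_neg
    rw [hA] at hc
    refine ⟨0, ?_⟩
    rw [zero_smul, add_zero]
    exact ⟨fun h => hc (h ▸ AddSubgroup.mem_zmultiples r),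
      fun h => hc (h ▸ neg_mem (AddSubgroup.mem_zmultiples r))⟩

lemma Commute.add_zsmul_right {r s : R} (hrs : Commute r s) (n : ℤ) : Commute r (s + n • r) :=
  hrs.add_right ((Commute.refl r).smul_right n)

def hub (r s : R) : Set R := insert r (Set.range fun n : ℤ => s + n • r)

lemma pairwise_commute_hub {r s : R} (hrs : Commute r s) :
    (hub r s).Pairwise Commute := by
  refine Set.pairwise_insert_of_symm.mpr ⟨?_, ?_⟩
  · rintro _ ⟨m, rfl⟩ _ ⟨n, rfl⟩ -
    exact ((Commute.refl s).add_right (hrs.symm.smul_right n)).add_left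
      ((hrs.add_zsmul_right n).smul_left m)
  · rintro _ ⟨n, rfl⟩ -
    exact hrs.add_zsmul_right n

lemma exists_mem_hub_eq_or_ncGraph_adj {r s : R} (hr : r ≠ 0) (hrs : Commute r s) (x : R) :
    ∃ t ∈ hub r s, x = t ∨ (ncGraph r).Adj x t := by
  by_cases hx : x * r - r * x = r ∨ x * r - r * x = -r
  · obtain ⟨n, hn⟩ := exists_commutator_add_zsmul_ne hr hx s
    refine ⟨s + n • r, Set.mem_insert_of_mem _ ⟨n, rfl⟩, Or.inr ⟨?_, hn⟩⟩
    rintro rfl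
    have h0 : (s + n • r) * r - r * (s + n • r) = 0 :=
      sub_eq_zero.mpr (hrs.add_zsmul_right n).eq.symm
    rcases hx with h | h <;> rw [h0] at h
    · exact hr h.symm
    · exact hr (neg_eq_zero.mp h.symm)
  · refine ⟨r, Set.mem_insert _ _, ?_⟩
    by_cases hxr : x = r
    · exact Or.inl hxr
    · exact Or.inr ⟨hxr, not_or.mp hx⟩

end NonUnitalRing

theorem stmt14_general {R : Type*} [NonUnitalRing R]
    (hZ : (centerSet R).ncard = 1)
    (r : R) (hr : r ∉ centerSet R) (h3 : r + r + r = 0)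
    (hC : ({y : R | r * y = y * r}).ncard ≠ 3) :
    ∀ x y : {a : R // a ∉ centerSet R}, x ≠ y →
      ∃ w : (deltaGraph r).Walk x y, w.length ≤ 3 := by
  have hcen := centerSet_eq_singleton_zero hZ
  have hr0 : r ≠ 0 := by rwa [hcen, Set.mem_singleton_iff] at hr
  obtain ⟨s, hrs, hs⟩ := exists_commute_notMem_zmultiples hr0
    (by rwa [three_nsmul, ← add_assoc]) hC
  have hK : ∀ t ∈ hub r s, t ∉ centerSet R := by
    rintro t (rfl | ⟨n, rfl⟩) ht
    · exact hr ht
    · rw [hcen, Set.mem_singleton_iff, add_eq_zero_iff_eq_neg, ← neg_zsmul] at ht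
      exact hs ⟨-n, ht.symm⟩
  intro x y _
  exact SimpleGraph.exists_walk_length_le_three_comap_subtype_of_isClique hK
    (isClique_ncGraph hr0 (pairwise_commute_hub hrs))
    (fun v _ => exists_mem_hub_eq_or_ncGraph_adj hr0 hrs v) x y

/-- if R is noncommutative, |Z(R)| = 1, r ∉ Z(R), 2r ≠ 0, 3r = 0 and
|C_R(r)| ≠ 3, then any two distinct vertices of Δ_R^r are joined by a path of
length at most 3. -/
theorem stmt14 {R : Type*} [NonUnitalRing R] [Fintype R]
    (hnc : ∃ a b : R, a * b ≠ b * a) (hZ : (centerSet R).ncard = 1)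
    (r : R) (hr : r ∉ centerSet R) (h2 : r + r ≠ 0) (h3 : r + r + r = 0)
    (hC : ({y : R | r * y = y * r}).ncard ≠ 3) :
    ∀ x y : {a : R // a ∉ centerSet R}, x ≠ y →
      ∃ w : (deltaGraph r).Walk x y, w.length ≤ 3 :=
  stmt14_general hZ r hr h3 hC
end
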